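/- Let E_U be an MFCE-relation on 𝔄 = 𝔄(I), define Ẽ_U by a Ẽ_U b iff a = b or (a E_U b and the E_U-class of a contains a ghost), and let w : I →₀ ℕ be a monomial with exponents r_i := w(i) whose E_U-class contains no ghost. Then Ẽ_U ⊆ ⋁_{i∈I} Eq(x_i^{r_i+1}, c^{r_i+1}); consequently Ẽ_U ∨ ⋁_{i∈I} Eq(x_i^{r_i+1}, c^{r_i+1}) = ⋁_{i∈I} Eq(x_i^{r_i+1}, c^{r_i+1}), i.e. the supertropical monoids A_w := 𝔄/⋁_i Eq(x_i^{r_i+1}, c^{r_i+1}) and U_w := 𝔄/(Ẽ_U ∨ ⋁_i Eq(x_i^{r_i+1}, c^{r_i+1})) coincide. -/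
import Mathlib


/-- The supertropical monoid `𝔄(I)` over `M = {cᵏ : k ∈ ℕ} ∪ {0}`: its tangible
elements are the monomials in commuting variables `(x_i)_{i ∈ I}`, identified with
finitely supported exponent vectors `I →₀ ℕ`; its ghosts are `gh k = cᵏ` and
`zero`. -/
inductive STA (I : Type) : Type where
  | tang : (I →₀ ℕ) → STA I
  | gh : ℕ → STA I
  | zero : STA I

namespace STA

variable {I : Type}

/-- The degree of a monomial. -/
def deg (z : I →₀ ℕ) : ℕ := z.sum fun _ n => n

/-- Multiplication in `𝔄(I)`: monomials multiply among themselves,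
`cᵏ · z = c^(k + deg z)`, ghosts multiply in `M`, and `0` is absorbing. -/
noncomputable def mul : STA I → STA I → STA I
  | zero, _ => zero
  | _, zero => zero
  | tang z, tang w => tang (z + w)
  | tang z, gh k => gh (deg z + k)
  | gh k, tang w => gh (k + deg w)
  | gh k, gh l => gh (k + l)

/-- The ghost elements of `𝔄(I)` (the elements of `M`). -/
def isGhost : STA I → Prop
  | tang _ => False
  | gh _ => True
  | zero => True

/-- The ghost map `a ↦ e·a` (`e = gh 0 = c⁰`). -/
noncomputable def nu : STA I → STA I := fun a => mul (gh 0) a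

/-- A relation is multiplicative. -/
def Mult (E : STA I → STA I → Prop) : Prop :=
  ∀ a b d : STA I, E a b → E (mul a d) (mul b d)

/-- An MFCE-relation on `𝔄(I)`: a multiplicative, fiber conserving equivalence
relation. -/
def MFCE (E : STA I → STA I → Prop) : Prop :=
  Equivalence E ∧ Mult E ∧ ∀ a b : STA I, E a b → nu a = nu b

/-- The smallest multiplicative equivalence relation containing `R`; for `R`
relating the elements of a set `S` (of equal ghost value) this is `Eq(S)`, and
applied to unions it yields joins `⋁` in the lattice of MFCE-relations. -/
def mgen (R : STA I → STA I → Prop) : STA I → STA I → Prop :=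
  fun a b => ∀ E : STA I → STA I → Prop,
    Equivalence E → Mult E → (∀ x y : STA I, R x y → E x y) → E a b

/-- The `E`-class of `a` contains no ghost (i.e. is a tangible class). -/
def GhostFree (E : STA I → STA I → Prop) (a : STA I) : Prop :=
  ¬ ∃ g : STA I, isGhost g ∧ E a g

/-- The relation `Ẽ_U`: `a Ẽ_U b` iff `a = b`, or `a E_U b` and the `E_U`-class of
`a` contains a ghost. -/
def tilde (EU : STA I → STA I → Prop) : STA I → STA I → Prop :=
  fun a b => a = b ∨ (EU a b ∧ ¬ GhostFree EU a)

end STA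

namespace STA

variable {I : Type}

theorem mgen_equiv (R : STA I → STA I → Prop) : Equivalence (mgen R) where
  refl a := fun E hE _ _ => hE.refl a
  symm h := fun E hE hm hR => hE.symm (h E hE hm hR)
  trans h1 h2 := fun E hE hm hR => hE.trans (h1 E hE hm hR) (h2 E hE hm hR)

theorem mgen_mult (R : STA I → STA I → Prop) : Mult (mgen R) :=
  fun a b d h E hE hm hR => hm a b d (h E hE hm hR)

theorem mgen_of {R : STA I → STA I → Prop} {a b : STA I} (h : R a b) : mgen R a b :=
  fun _ _ _ hR => hR _ _ h

theorem deg_add (a b : I →₀ ℕ) : deg (a + b) = deg a + deg b :=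
  Finsupp.sum_add_index' (fun _ => rfl) (fun _ _ _ => rfl)

theorem deg_single (i : I) (n : ℕ) : deg (Finsupp.single i n) = n :=
  Finsupp.sum_single_index rfl

/-- Key lemma A: if some exponent of `z` exceeds `w`, then `z` is ghostified by `Fw`. -/
theorem keyA (w z : I →₀ ℕ) (i : I) (hi : w i + 1 ≤ z i) :
    mgen (fun a b : STA I => ∃ i : I,
      a = STA.tang (Finsupp.single i (w i + 1)) ∧ b = STA.gh (w i + 1))
      (tang z) (gh (deg z)) := by
  set s : I →₀ ℕ := Finsupp.single i (w i + 1) with hs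
  have hle : s ≤ z := Finsupp.single_le_iff.mpr hi
  have hsz : s + (z - s) = z := add_tsub_cancel_of_le hle
  have hgen : mgen (fun a b : STA I => ∃ i : I,
      a = STA.tang (Finsupp.single i (w i + 1)) ∧ b = STA.gh (w i + 1))
      (tang s) (gh (w i + 1)) := mgen_of ⟨i, rfl, rfl⟩
  have h2 := mgen_mult _ _ _ (tang (z - s)) hgen
  have e1 : mul (tang s) (tang (z - s)) = tang z := by
    show tang (s + (z - s)) = tang z
    rw [hsz]
  have e2 : mul (gh (w i + 1)) (tang (z - s)) = gh (deg z) := by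
    show gh (w i + 1 + deg (z - s)) = gh (deg z)
    have : deg z = deg s + deg (z - s) := by rw [← hsz, deg_add]; rw [hsz]
    rw [this, hs, deg_single]
  rw [e1, e2] at h2
  exact h2

/-- Key lemma B: a monomial `EU`-related to a ghost must exceed `w` somewhere. -/
theorem keyB (EU : STA I → STA I → Prop) (hEU : MFCE EU)
    (w : I →₀ ℕ) (hw : GhostFree EU (tang w))
    (z : I →₀ ℕ) (g : STA I) (hg : isGhost g) (h : EU (tang z) g) :
    ∃ i : I, w i + 1 ≤ z i := by
  by_contra hcon
  push_neg at hcon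
  have hle : z ≤ w := Finsupp.le_def.mpr fun i => Nat.lt_succ_iff.mp (hcon i)
  have hzw : z + (w - z) = w := add_tsub_cancel_of_le hle
  have h2 := hEU.2.1 _ _ (tang (w - z)) h
  have e1 : mul (tang z) (tang (w - z)) = tang w := by
    show tang (z + (w - z)) = tang w
    rw [hzw]
  rw [e1] at h2
  apply hw
  cases g with
  | tang _ => exact absurd hg (by simp [isGhost])
  | gh k => exact ⟨gh (k + deg (w - z)), trivial, h2⟩
  | zero => exact ⟨zero, trivial, h2⟩

end STA

/-- If the `E_U`-class of the monomial `w` contains no ghost, then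
`Ẽ_U ⊆ ⋁_i Eq(x_i^{w i + 1}, c^{w i + 1})`; consequently
`Ẽ_U ∨ ⋁_i Eq(x_i^{w i + 1}, c^{w i + 1}) = ⋁_i Eq(x_i^{w i + 1}, c^{w i + 1})`,
i.e. `A_w` and `U_w` coincide. -/
theorem stmt18 {I : Type} (EU : STA I → STA I → Prop) (hEU : STA.MFCE EU)
    (w : I →₀ ℕ) (hw : STA.GhostFree EU (STA.tang w))
    (Fw : STA I → STA I → Prop)
    (hFw : Fw = STA.mgen (fun a b : STA I => ∃ i : I,
      a = STA.tang (Finsupp.single i (w i + 1)) ∧ b = STA.gh (w i + 1)))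
    (Ew : STA I → STA I → Prop)
    (hEw : Ew = STA.mgen (fun a b : STA I => STA.tilde EU a b ∨ ∃ i : I,
      a = STA.tang (Finsupp.single i (w i + 1)) ∧ b = STA.gh (w i + 1))) :
    (∀ a b : STA I, STA.tilde EU a b → Fw a b) ∧
    (∀ a b : STA I, Ew a b ↔ Fw a b) := by
  subst hFw hEw
  set R : STA I → STA I → Prop := fun a b : STA I => ∃ i : I,
      a = STA.tang (Finsupp.single i (w i + 1)) ∧ b = STA.gh (w i + 1) with hR
  -- any element EU-related to a ghost is Fw-related to its nu-value
  have hnu : ∀ (x : STA I) (g : STA I), STA.isGhost g → EU x g →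
      STA.mgen R x (STA.nu x) := by
    intro x g hg h
    cases x with
    | tang z =>
        obtain ⟨i, hi⟩ := STA.keyB EU hEU w hw z g hg h
        have hA := STA.keyA w z i hi
        have : STA.nu (STA.tang z) = STA.gh (STA.deg z) := by
          show STA.gh (0 + STA.deg z) = STA.gh (STA.deg z)
          rw [Nat.zero_add]
        rw [this]
        exact hA
    | gh k =>
        have : STA.nu (STA.gh k : STA I) = STA.gh k := by
          show STA.gh (0 + k) = STA.gh k
          rw [Nat.zero_add]
        rw [this]
        exact (STA.mgen_equiv R).refl _
    | zero => exact (STA.mgen_equiv R).refl _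
  have part1 : ∀ a b : STA I, STA.tilde EU a b → STA.mgen R a b := by
    intro a b hab
    rcases hab with rfl | ⟨hab, hgh⟩
    · exact (STA.mgen_equiv R).refl a
    · rw [STA.GhostFree] at hgh
      push_neg at hgh
      obtain ⟨g, hg, hag⟩ := hgh
      have hbg : EU b g := hEU.1.trans (hEU.1.symm hab) hag
      have ha := hnu a g hg hag
      have hb := hnu b g hg hbg
      have hnuab : STA.nu a = STA.nu b := hEU.2.2 a b hab
      rw [hnuab] at ha
      exact (STA.mgen_equiv R).trans ha ((STA.mgen_equiv R).symm hb)
  refine ⟨part1, fun a b => ⟨?_, ?_⟩⟩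
  · intro h
    exact h (STA.mgen R) (STA.mgen_equiv R) (STA.mgen_mult R)
      (fun x y hxy => hxy.elim (part1 x y) (fun h' => STA.mgen_of h'))
  · intro h
    intro E hE hm hgen
    exact h E hE hm (fun x y hxy => hgen x y (Or.inr hxy))
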